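/- Let ρ₁, ρ₂ be finite positive Borel measures on the circle Λ with ρ₁(Λ) ≤ ρ₂(Λ), and let v ∈ 𝒥. (a) If l ∈ 𝒥 is such that the closed arc [l,v] is contained in 𝒥 and for every ε > 0 the arc [l−ε, l) contains a point not belonging to 𝒥, then J(v) = E(l,v). (b) If l ∉ 𝒥 and the half-open arc (l,v] is contained in 𝒥, then J(v) = ρ₁((l,v]) − ρ₂((l,v]). -/

import Mathlib

open MeasureTheory Set Filter Topology

noncomputable section

instance fact01 : Fact ((0:ℝ) < 1) := ⟨zero_lt_one⟩

/-- The circle `ℝ/ℤ`. -/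
abbrev Circle' : Type := AddCircle (1:ℝ)

/-- The angular position of `w` in the arc starting at `u`, measured positively;
a real number in `[0,1)`. -/
noncomputable def theta (u w : Circle') : ℝ := ((AddCircle.equivIco 1 0) (w - u) : ℝ)

/-- The closed arc `[u,v]` from `u` to `v` in the positive direction. -/
def arcCC (u v : Circle') : Set Circle' := {w | theta u w ≤ theta u v}

/-- The half-open arc `(u,v]`. -/
def arcOC (u v : Circle') : Set Circle' := {w | 0 < theta u w ∧ theta u w ≤ theta u v}

/-- The half-open arc `[u,v)`. -/
def arcCO (u v : Circle') : Set Circle' := {w | theta u w < theta u v}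

/-- The open arc `(u,v)`. -/
def arcOO (u v : Circle') : Set Circle' := {w | 0 < theta u w ∧ theta u w < theta u v}

/-- The excess `E(u,v) = ρ₁([u,v]) - ρ₂([u,v])`. -/
noncomputable def excess (ρ₁ ρ₂ : Measure Circle') (u v : Circle') : ℝ :=
  (ρ₁ (arcCC u v)).toReal - (ρ₂ (arcCC u v)).toReal

/-- The flux `J(v) = sup_u max (E(u,v)) 0`. -/
noncomputable def flux (ρ₁ ρ₂ : Measure Circle') (v : Circle') : ℝ :=
  ⨆ u : Circle', max (excess ρ₁ ρ₂ u v) 0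

/-- The set `𝒥 = {v | ∃ u, E(u,v) > 0}`. -/
def Jset (ρ₁ ρ₂ : Measure Circle') : Set Circle' := {v | ∃ u : Circle', 0 < excess ρ₁ ρ₂ u v}

/-! Fix the left endpoint `l` and measure positions on the arc `(l, v]` by `θ = theta l`.
The profile `F(t) = κ + (ρ₁ - ρ₂)((l, t])`, with `κ = E(l, l)` in (a) and `κ = 0` in (b), is
right-continuous in `θ` with left limits `G(x) = κ + (ρ₁ - ρ₂)((l, x))`. Mass to the left of `l`
never helps: `E(x, t) ≤ F(t)` whenever `x ∉ (l, t]` (in (a) because `ρ₁ - ρ₂` is nonpositive on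
every arc `[x, l)`, a limit of arcs `[x, w]` with `w ∉ 𝒥`). For `x ∈ (l, t]` one has
`F(t) = G(x) + E(x, t)`, so at a point `t ∈ 𝒥` with `F(t) < 0` the positive excess `E(x, t)`
produces a strictly smaller value of `F` before `t`. Taking the infimum of a sublevel set of the
right-continuous function `F` shows that this is impossible, so `F ≥ 0` and `G ≥ 0` on `(l, v]`.
Hence `E(u, v) ≤ F(v)` for every `u`, i.e. `J(v) ≤ F(v)`; equality is attained at `u = l` in (a)
and in the limit `u ↓ l` in (b). -/

lemma theta_mem_Ico (a w : Circle') : theta a w ∈ Ico (0:ℝ) 1 := by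
  simpa [theta] using ((AddCircle.equivIco 1 0) (w - a)).2

lemma theta_nonneg (a w : Circle') : 0 ≤ theta a w := (theta_mem_Ico a w).1

lemma theta_lt_one (a w : Circle') : theta a w < 1 := (theta_mem_Ico a w).2

lemma theta_eq_iff {a w : Circle'} {r : ℝ} (hr : r ∈ Ico (0:ℝ) 1) :
    theta a w = r ↔ (r : Circle') = w - a := by
  have hr' : r ∈ Ico (0:ℝ) (0 + 1) := by simpa using hr
  have : theta a w = r ↔ AddCircle.equivIco 1 0 (w - a) = ⟨r, hr'⟩ :=
    Subtype.ext_iff (a1 := AddCircle.equivIco 1 0 (w - a)) (a2 := ⟨r, hr'⟩) |>.symm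
  rw [this, ← Equiv.eq_symm_apply, eq_comm]
  rfl

lemma coe_theta (a w : Circle') : ((theta a w : ℝ) : Circle') = w - a :=
  (theta_eq_iff (theta_mem_Ico a w)).1 rfl

lemma theta_self (a : Circle') : theta a a = 0 :=
  (theta_eq_iff (by simp)).2 (by simp)

lemma theta_eq_zero_iff {a w : Circle'} : theta a w = 0 ↔ w = a := by
  rw [theta_eq_iff (by simp), eq_comm, AddCircle.coe_zero, sub_eq_zero]

lemma theta_add_coe (a : Circle') {r : ℝ} (hr : r ∈ Ico (0:ℝ) 1) :
    theta a (a + (r : Circle')) = r :=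
  (theta_eq_iff hr).2 (by abel)

lemma theta_of_le {a b w : Circle'} (h : theta a b ≤ theta a w) :
    theta b w = theta a w - theta a b := by
  refine (theta_eq_iff ⟨by linarith, by linarith [theta_lt_one a w, theta_nonneg a b]⟩).2 ?_
  rw [AddCircle.coe_sub, coe_theta, coe_theta]; abel

lemma theta_of_lt {a b w : Circle'} (h : theta a w < theta a b) :
    theta b w = theta a w - theta a b + 1 := by
  refine (theta_eq_iff ⟨by linarith [theta_lt_one a b, theta_nonneg a w], by linarith⟩).2 ?_
  rw [AddCircle.coe_add, AddCircle.coe_sub, coe_theta, coe_theta, AddCircle.coe_period]; abel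

lemma arcCC_eq_preimage {a b c : Circle'} (h : theta a b ≤ theta a c) :
    arcCC b c = theta a ⁻¹' Icc (theta a b) (theta a c) := by
  ext w
  simp only [arcCC, mem_ofPred_eq, mem_preimage, mem_Icc, theta_of_le h]
  rcases le_or_gt (theta a b) (theta a w) with hw | hw
  · rw [theta_of_le hw]; constructor <;> intro <;> (try constructor) <;> linarith
  · rw [theta_of_lt hw]
    constructor <;> intro <;> linarith [theta_lt_one a c, theta_nonneg a w]

lemma arcCO_eq_preimage {a b c : Circle'} (h : theta a b ≤ theta a c) :
    arcCO b c = theta a ⁻¹' Ico (theta a b) (theta a c) := by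
  ext w
  simp only [arcCO, mem_ofPred_eq, mem_preimage, mem_Ico, theta_of_le h]
  rcases le_or_gt (theta a b) (theta a w) with hw | hw
  · rw [theta_of_le hw]; constructor <;> intro <;> (try constructor) <;> linarith
  · rw [theta_of_lt hw]
    constructor <;> intro <;> linarith [theta_lt_one a c, theta_nonneg a w]

lemma arcOC_eq_preimage {a b c : Circle'} (h : theta a b ≤ theta a c) :
    arcOC b c = theta a ⁻¹' Ioc (theta a b) (theta a c) := by
  ext w
  simp only [arcOC, mem_ofPred_eq, mem_preimage, mem_Ioc, theta_of_le h]
  rcases le_or_gt (theta a b) (theta a w) with hw | hw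
  · rw [theta_of_le hw]; constructor <;> intro <;> constructor <;> linarith
  · rw [theta_of_lt hw]
    constructor <;> intro <;> linarith [theta_lt_one a c, theta_nonneg a w]

lemma theta_le_or_mem_arcOC (l x t : Circle') : theta x l ≤ theta x t ∨ x ∈ arcOC l t := by
  rcases eq_or_ne x l with rfl | hxl
  · exact .inl (theta_self x ▸ theta_nonneg x t)
  rcases le_or_gt (theta l x) (theta l t) with h | h
  · exact .inr ⟨(theta_nonneg l x).lt_of_ne' (theta_eq_zero_iff.not.2 hxl), h⟩
  · left
    have hx : theta l l < theta l x := by linarith [theta_self l, theta_nonneg l t]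
    rw [theta_of_lt hx, theta_of_lt h, theta_self]
    linarith [theta_nonneg l t]

lemma measurable_theta (a : Circle') : Measurable (theta a) :=
  measurable_subtype_coe.comp
    ((AddCircle.measurableEquivIco 1 0).measurable.comp (measurable_sub_const a))

section MeasureDiff

variable {α : Type*} [MeasurableSpace α]

def measureDiff (μ ν : Measure α) (s : Set α) : ℝ := (μ s).toReal - (ν s).toReal

variable {μ ν : Measure α}

lemma measureDiff_empty : measureDiff μ ν ∅ = 0 := by simp [measureDiff]

lemma measureDiff_union [IsFiniteMeasure μ] [IsFiniteMeasure ν] {s t : Set α}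
    (hd : Disjoint s t) (ht : MeasurableSet t) :
    measureDiff μ ν (s ∪ t) = measureDiff μ ν s + measureDiff μ ν t := by
  simp only [measureDiff, measure_union hd ht,
    ENNReal.toReal_add (measure_ne_top _ _) (measure_ne_top _ _)]
  ring

lemma measureDiff_map {β : Type*} [MeasurableSpace β] {f : α → β} (hf : Measurable f)
    {s : Set β} (hs : MeasurableSet s) :
    measureDiff (μ.map f) (ν.map f) s = measureDiff μ ν (f ⁻¹' s) := by
  simp only [measureDiff, Measure.map_apply hf hs]

lemma Filter.Tendsto.measureDiff [IsFiniteMeasure μ] [IsFiniteMeasure ν] {ι : Type*}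
    {l : Filter ι} {s : ι → Set α} {t : Set α} (hμ : Tendsto (fun i ↦ μ (s i)) l (𝓝 (μ t)))
    (hν : Tendsto (fun i ↦ ν (s i)) l (𝓝 (ν t))) :
    Tendsto (fun i ↦ measureDiff μ ν (s i)) l (𝓝 (measureDiff μ ν t)) :=
  ((ENNReal.tendsto_toReal (measure_ne_top μ t)).comp hμ).sub
    ((ENNReal.tendsto_toReal (measure_ne_top ν t)).comp hν)

end MeasureDiff

lemma tendsto_measure_biUnion_lt {α ι : Type*} [MeasurableSpace α] (μ : Measure α)
    [LinearOrder ι] [TopologicalSpace ι] [OrderTopology ι] [DenselyOrdered ι]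
    [FirstCountableTopology ι] {s : ι → Set α} (hs : Monotone s) (b : ι) :
    Tendsto (fun r ↦ μ (s r)) (𝓝[<] b) (𝓝 (μ (⋃ r < b, s r))) := by
  have : (atTop : Filter (Iio b)).IsCountablyGenerated := by
    rw [← comap_coe_Iio_nhdsLT b]
    infer_instance
  simp_rw [← map_coe_Iio_atTop b, tendsto_map'_iff, ← mem_Iio, biUnion_eq_iUnion]
  exact tendsto_measure_iUnion_atTop fun i j hij ↦ hs (Subtype.mono_coe _ hij)

section RealLine

variable (μ : Measure ℝ)

lemma tendsto_measure_Ioc_nhdsLT (a b : ℝ) :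
    Tendsto (fun s ↦ μ (Ioc a s)) (𝓝[<] b) (𝓝 (μ (Ioo a b))) := by
  convert tendsto_measure_biUnion_lt μ (fun _ _ h ↦ Ioc_subset_Ioc_right h) b
  ext x
  simp only [mem_Ioo, mem_iUnion, mem_Ioc, exists_prop]
  exact ⟨fun ⟨hax, hxb⟩ ↦ ⟨x, hxb, hax, le_rfl⟩, fun ⟨r, hrb, hax, hxr⟩ ↦ ⟨hax, hxr.trans_lt hrb⟩⟩

lemma tendsto_measure_Iic_nhdsLT (b : ℝ) :
    Tendsto (fun s ↦ μ (Iic s)) (𝓝[<] b) (𝓝 (μ (Iio b))) := by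
  convert tendsto_measure_biUnion_lt μ (fun _ _ h ↦ Iic_subset_Iic.2 h) b
  exact (isLUB_Iio.biUnion_Iic_eq_Iio self_notMem_Iio).symm

variable [IsFiniteMeasure μ]

lemma tendsto_measure_Ioc_nhdsGT (a b : ℝ) :
    Tendsto (fun s ↦ μ (Ioc a s)) (𝓝[>] b) (𝓝 (μ (Ioc a b))) := by
  have h := tendsto_measure_biInter_gt (μ := μ) (s := Ioc a) (a := b)
    (fun _ _ ↦ nullMeasurableSet_Ioc) (fun _ _ _ h ↦ Ioc_subset_Ioc_right h)
    ⟨b + 1, by linarith, measure_ne_top μ _⟩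
  have hI : ⋂ r > b, Ioc a r = Ioc a b := by
    ext x
    simp only [mem_Ioc, mem_iInter]
    exact ⟨fun h ↦ ⟨(h (b + 1) (by linarith)).1,
      le_of_forall_gt_imp_ge_of_dense fun r hr ↦ (h r hr).2⟩,
      fun ⟨hax, hxb⟩ r hr ↦ ⟨hax, hxb.trans hr.le⟩⟩
  rwa [hI] at h

lemma tendsto_measure_Ioo_nhdsGT (a : ℝ) :
    Tendsto (fun s ↦ μ (Ioo a s)) (𝓝[>] a) (𝓝 0) := by
  have h := tendsto_measure_biInter_gt (μ := μ) (s := Ioo a) (a := a)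
    (fun _ _ ↦ nullMeasurableSet_Ioo) (fun _ _ _ h ↦ Ioo_subset_Ioo_right h)
    ⟨a + 1, by linarith, measure_ne_top μ _⟩
  have hI : ⋂ r > a, Ioo a r = ∅ := by
    refine eq_empty_of_forall_notMem fun x hx ↦ ?_
    simp only [mem_iInter, mem_Ioo] at hx
    exact (hx x (hx (a + 1) (by linarith)).1).2.false
  rwa [hI, measure_empty] at h

end RealLine

lemma nonneg_of_forall_exists_lt {F : ℝ → ℝ} {L : ℝ}
    (hF : ∀ s ∈ Icc 0 L, ContinuousWithinAt F (Ioi s) s) (h0 : 0 ≤ F 0)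
    (hlt : ∀ s ∈ Ioc 0 L, F s < 0 → ∃ θ ∈ Ico 0 s, F θ < F s) :
    ∀ s ∈ Icc 0 L, 0 ≤ F s := by
  intro s₀ hs₀
  by_contra! hneg
  set B := Icc 0 L ∩ F ⁻¹' Iic (F s₀)
  have hB : B.Nonempty := ⟨s₀, hs₀, le_refl (F s₀)⟩
  have hglb : IsGLB B (sInf B) := isGLB_csInf hB ⟨0, fun x hx ↦ hx.1.1⟩
  have hcl := hglb.mem_closure hB
  have hr : sInf B ∈ Icc 0 L := closure_minimal inter_subset_left isClosed_Icc hcl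
  have hFr : F (sInf B) ≤ F s₀ := by
    have := ((continuousWithinAt_Ioi_iff_Ici.1 (hF _ hr)).mono
      fun x hx ↦ hglb.1 hx).mem_closure_image hcl
    exact closure_minimal (image_subset_iff.2 fun x hx ↦ hx.2) isClosed_Iic this
  have hr0 : 0 < sInf B := hr.1.lt_of_ne fun h ↦ by rw [← h] at hFr; linarith
  obtain ⟨θ, hθ, hθr⟩ := hlt _ ⟨hr0, hr.2⟩ (hFr.trans_lt hneg)
  exact (hglb.1 ⟨⟨hθ.1, hθ.2.le.trans hr.2⟩, hθr.le.trans hFr⟩).not_gt hθ.2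

lemma nonneg_of_forall_exists_leftLim_lt {F G : ℝ → ℝ} {L : ℝ}
    (hF : ∀ s ∈ Icc 0 L, ContinuousWithinAt F (Ioi s) s)
    (hG : ∀ a ∈ Ioc 0 L, Tendsto F (𝓝[<] a) (𝓝 (G a))) (h0 : 0 ≤ F 0)
    (hlt : ∀ s ∈ Ioc 0 L, F s < 0 → ∃ a ∈ Ioc 0 s, G a < F s) :
    (∀ s ∈ Icc 0 L, 0 ≤ F s) ∧ ∀ a ∈ Ioc 0 L, 0 ≤ G a := by
  have hFnn : ∀ s ∈ Icc 0 L, 0 ≤ F s := by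
    refine nonneg_of_forall_exists_lt hF h0 fun s hs hFs ↦ ?_
    obtain ⟨a, ha, hGa⟩ := hlt s hs hFs
    obtain ⟨θ, hFθ, hθ⟩ := ((hG a ⟨ha.1, ha.2.trans hs.2⟩).eventually (gt_mem_nhds hGa)
      |>.and (Ioo_mem_nhdsLT ha.1)).exists
    exact ⟨θ, ⟨hθ.1.le, hθ.2.trans_le ha.2⟩, hFθ⟩
  refine ⟨hFnn, fun a ha ↦ ge_of_tendsto (hG a ha) ?_⟩
  filter_upwards [Ioo_mem_nhdsLT ha.1] with θ hθ
  exact hFnn θ ⟨hθ.1.le, hθ.2.le.trans ha.2⟩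

section Flux

variable (ρ₁ ρ₂ : Measure Circle')

lemma excess_eq_measureDiff (u v : Circle') :
    excess ρ₁ ρ₂ u v = measureDiff ρ₁ ρ₂ (arcCC u v) := rfl

lemma excess_nonpos_of_notMem_Jset {w : Circle'} (hw : w ∉ Jset ρ₁ ρ₂) (u : Circle') :
    excess ρ₁ ρ₂ u w ≤ 0 :=
  not_lt.1 fun h ↦ hw ⟨u, h⟩

lemma excess_le_flux [IsFiniteMeasure ρ₁] (u v : Circle') : excess ρ₁ ρ₂ u v ≤ flux ρ₁ ρ₂ v := by
  refine (le_max_left _ _).trans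
    (le_ciSup (f := fun u ↦ max (excess ρ₁ ρ₂ u v) 0) ⟨(ρ₁ univ).toReal, ?_⟩ u)
  rintro _ ⟨w, rfl⟩
  exact max_le ((sub_le_self _ ENNReal.toReal_nonneg).trans
    (ENNReal.toReal_mono (measure_ne_top _ _) (measure_mono (subset_univ _))))
    ENNReal.toReal_nonneg

lemma flux_nonneg (v : Circle') : 0 ≤ flux ρ₁ ρ₂ v :=
  Real.iSup_nonneg fun _ ↦ le_max_right _ _

variable [IsFiniteMeasure ρ₁] [IsFiniteMeasure ρ₂]

lemma measureDiff_theta_preimage_union (a : Circle') {s t : Set ℝ} (hd : Disjoint s t)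
    (ht : MeasurableSet t) :
    measureDiff ρ₁ ρ₂ (theta a ⁻¹' (s ∪ t)) =
      measureDiff ρ₁ ρ₂ (theta a ⁻¹' s) + measureDiff ρ₁ ρ₂ (theta a ⁻¹' t) :=
  measureDiff_union (hd.preimage _) (measurable_theta a ht)

lemma excess_eq_measureDiff_arcCO_add {x l t : Circle'} (h : theta x l ≤ theta x t) :
    excess ρ₁ ρ₂ x t = measureDiff ρ₁ ρ₂ (arcCO x l) + excess ρ₁ ρ₂ l t := by
  have hU : arcCC x t = theta x ⁻¹' (Iio (theta x l) ∪ Icc (theta x l) (theta x t)) := by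
    rw [Iio_union_Icc_eq_Iic h]; rfl
  rw [excess_eq_measureDiff, hU, measureDiff_theta_preimage_union ρ₁ ρ₂ x
    ((Iio_disjoint_Ici le_rfl).mono_right Icc_subset_Ici_self) measurableSet_Icc,
    excess_eq_measureDiff, arcCC_eq_preimage h]
  rfl

lemma excess_eq_excess_add {x l t : Circle'} (h : theta x l ≤ theta x t) :
    excess ρ₁ ρ₂ x t = excess ρ₁ ρ₂ x l + measureDiff ρ₁ ρ₂ (arcOC l t) := by
  have hU : arcCC x t = theta x ⁻¹' (Iic (theta x l) ∪ Ioc (theta x l) (theta x t)) := by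
    rw [Iic_union_Ioc_eq_Iic h]; rfl
  rw [excess_eq_measureDiff, hU, measureDiff_theta_preimage_union ρ₁ ρ₂ x
    (Iic_disjoint_Ioc le_rfl) measurableSet_Ioc, excess_eq_measureDiff, arcOC_eq_preimage h]
  rfl

lemma measureDiff_arcOC_eq_add_excess {l x t : Circle'} (hx : x ∈ arcOC l t) :
    measureDiff ρ₁ ρ₂ (arcOC l t) = measureDiff ρ₁ ρ₂ (arcOO l x) + excess ρ₁ ρ₂ x t := by
  have hU : arcOC l t = theta l ⁻¹' (Ioo 0 (theta l x) ∪ Icc (theta l x) (theta l t)) := by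
    rw [Ioo_union_Icc_eq_Ioc hx.1 hx.2]; rfl
  rw [hU, measureDiff_theta_preimage_union ρ₁ ρ₂ l
    ((Iio_disjoint_Ici le_rfl).mono Ioo_subset_Iio_self Icc_subset_Ici_self) measurableSet_Icc,
    excess_eq_measureDiff, arcCC_eq_preimage hx.2]
  rfl

lemma measureDiff_arcCO_nonpos {l : Circle'}
    (hε : ∀ ε : ℝ, 0 < ε → ∃ w ∈ arcCO (l - (ε : Circle')) l, w ∉ Jset ρ₁ ρ₂) (x : Circle') :
    measureDiff ρ₁ ρ₂ (arcCO x l) ≤ 0 := by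
  rcases eq_or_ne x l with rfl | hxl
  · have : arcCO x x = ∅ := eq_empty_of_forall_notMem fun w hw ↦
      (theta_nonneg x w).not_gt (hw.trans_eq (theta_self x))
    rw [this, measureDiff_empty]
  have hΛ : 0 < theta x l := (theta_nonneg x l).lt_of_ne' (theta_eq_zero_iff.not.2 hxl.symm)
  have hlim := (tendsto_measure_Iic_nhdsLT (ρ₁.map (theta x)) (theta x l)).measureDiff
    (tendsto_measure_Iic_nhdsLT (ρ₂.map (theta x)) (theta x l))
  rw [measureDiff_map (measurable_theta x) measurableSet_Iio] at hlim
  refine le_of_tendsto_of_frequently hlim ((nhdsLT_basis _).frequently_iff.2 fun y hy ↦ ?_)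
  obtain ⟨δ, hδ0, hδ⟩ := exists_between (lt_min (sub_pos.2 hy) hΛ)
  obtain ⟨w, hw, hwJ⟩ := hε δ hδ0
  have hb : theta x (l - δ) = theta x l - δ :=
    (theta_eq_iff ⟨by linarith [min_le_right (theta x l - y) (theta x l)],
      by linarith [theta_lt_one x l]⟩).2 (by rw [AddCircle.coe_sub, coe_theta]; abel)
  rw [arcCO_eq_preimage (a := x) (by rw [hb]; linarith), hb] at hw
  refine ⟨theta x w, ⟨by linarith [hw.1, min_le_left (theta x l - y) (theta x l)], hw.2⟩, ?_⟩
  rw [measureDiff_map (measurable_theta x) measurableSet_Iic]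
  exact excess_nonpos_of_notMem_Jset ρ₁ ρ₂ hwJ x

lemma add_measureDiff_nonneg_of_arcOC_subset_Jset {l v : Circle'} {κ : ℝ} (hκ : 0 ≤ κ)
    (hbefore : ∀ x t, theta x l ≤ theta x t →
      excess ρ₁ ρ₂ x t ≤ κ + measureDiff ρ₁ ρ₂ (arcOC l t))
    (hsub : arcOC l v ⊆ Jset ρ₁ ρ₂) :
    0 ≤ κ + measureDiff ρ₁ ρ₂ (arcOC l v) ∧
      ∀ x ∈ arcOC l v, 0 ≤ κ + measureDiff ρ₁ ρ₂ (arcOO l x) := by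
  set μ₁ := ρ₁.map (theta l) with hμ₁
  set μ₂ := ρ₂.map (theta l) with hμ₂
  set F : ℝ → ℝ := fun s ↦ κ + measureDiff μ₁ μ₂ (Ioc 0 s)
  set G : ℝ → ℝ := fun a ↦ κ + measureDiff μ₁ μ₂ (Ioo 0 a)
  have hF (t : Circle') : κ + measureDiff ρ₁ ρ₂ (arcOC l t) = F (theta l t) := by
    show _ = κ + measureDiff μ₁ μ₂ (Ioc 0 (theta l t))
    rw [hμ₁, hμ₂, measureDiff_map (measurable_theta l) measurableSet_Ioc]
    rfl
  have hG (x : Circle') : κ + measureDiff ρ₁ ρ₂ (arcOO l x) = G (theta l x) := by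
    show _ = κ + measureDiff μ₁ μ₂ (Ioo 0 (theta l x))
    rw [hμ₁, hμ₂, measureDiff_map (measurable_theta l) measurableSet_Ioo]
    rfl
  have hundercut : ∀ s ∈ Ioc 0 (theta l v), F s < 0 → ∃ a ∈ Ioc 0 s, G a < F s := by
    intro s hs hFs
    have hts : theta l (l + (s : Circle')) = s :=
      theta_add_coe l ⟨hs.1.le, hs.2.trans_lt (theta_lt_one l v)⟩
    obtain ⟨x, hx⟩ := hsub (show 0 < _ ∧ _ ≤ _ by rw [hts]; exact hs)
    rw [← hts, ← hF] at hFs ⊢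
    rcases theta_le_or_mem_arcOC l x (l + s) with h | hxt
    · linarith [hbefore x _ h]
    · refine ⟨theta l x, hxt, ?_⟩
      rw [← hG, measureDiff_arcOC_eq_add_excess ρ₁ ρ₂ hxt]
      linarith
  obtain ⟨hFnn, hGnn⟩ := nonneg_of_forall_exists_leftLim_lt (F := F) (G := G)
    (fun s _ ↦ tendsto_const_nhds.add ((tendsto_measure_Ioc_nhdsGT μ₁ 0 s).measureDiff
      (tendsto_measure_Ioc_nhdsGT μ₂ 0 s)))
    (fun a _ ↦ tendsto_const_nhds.add ((tendsto_measure_Ioc_nhdsLT μ₁ 0 a).measureDiff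
      (tendsto_measure_Ioc_nhdsLT μ₂ 0 a)))
    (by simpa [F, measureDiff_empty] using hκ) hundercut
  exact ⟨hF v ▸ hFnn _ ⟨theta_nonneg l v, le_rfl⟩, fun x hx ↦ hG x ▸ hGnn _ hx⟩

theorem flux_le_of_arcOC_subset_Jset {l v : Circle'} {κ : ℝ} (hκ : 0 ≤ κ)
    (hbefore : ∀ x t, theta x l ≤ theta x t →
      excess ρ₁ ρ₂ x t ≤ κ + measureDiff ρ₁ ρ₂ (arcOC l t))
    (hsub : arcOC l v ⊆ Jset ρ₁ ρ₂) :
    flux ρ₁ ρ₂ v ≤ κ + measureDiff ρ₁ ρ₂ (arcOC l v) := by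
  obtain ⟨hv, hx⟩ := add_measureDiff_nonneg_of_arcOC_subset_Jset ρ₁ ρ₂ hκ hbefore hsub
  refine ciSup_le fun u ↦ max_le ?_ hv
  rcases theta_le_or_mem_arcOC l u v with h | hu
  · exact hbefore u v h
  · rw [measureDiff_arcOC_eq_add_excess ρ₁ ρ₂ hu]
    linarith [hx u hu]

theorem flux_eq_excess_of_arcCC_subset_Jset {l v : Circle'} (hl : l ∈ Jset ρ₁ ρ₂)
    (hsub : arcCC l v ⊆ Jset ρ₁ ρ₂)
    (hε : ∀ ε : ℝ, 0 < ε → ∃ w ∈ arcCO (l - (ε : Circle')) l, w ∉ Jset ρ₁ ρ₂) :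
    flux ρ₁ ρ₂ v = excess ρ₁ ρ₂ l v := by
  have hCO := measureDiff_arcCO_nonpos ρ₁ ρ₂ hε
  have hl0 (t : Circle') :
      excess ρ₁ ρ₂ l t = excess ρ₁ ρ₂ l l + measureDiff ρ₁ ρ₂ (arcOC l t) :=
    excess_eq_excess_add ρ₁ ρ₂ (by rw [theta_self]; exact theta_nonneg l t)
  have hκ : 0 ≤ excess ρ₁ ρ₂ l l := by
    obtain ⟨x, hx⟩ := hl
    linarith [excess_eq_measureDiff_arcCO_add ρ₁ ρ₂ (le_refl (theta x l)), hCO x]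
  refine le_antisymm ?_ (excess_le_flux ρ₁ ρ₂ l v)
  rw [hl0]
  refine flux_le_of_arcOC_subset_Jset ρ₁ ρ₂ hκ (fun x t h ↦ ?_)
    (Subset.trans (b := arcCC l v) (fun _ hw ↦ hw.2) hsub)
  rw [excess_eq_measureDiff_arcCO_add ρ₁ ρ₂ h, hl0]
  linarith [hCO x]

theorem flux_eq_measureDiff_arcOC_of_notMem_Jset {l v : Circle'} (hl : l ∉ Jset ρ₁ ρ₂)
    (hsub : arcOC l v ⊆ Jset ρ₁ ρ₂) :
    flux ρ₁ ρ₂ v = measureDiff ρ₁ ρ₂ (arcOC l v) := by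
  refine le_antisymm ?_ ?_
  · simpa using flux_le_of_arcOC_subset_Jset ρ₁ ρ₂ le_rfl (fun x t h ↦ by
      rw [excess_eq_excess_add ρ₁ ρ₂ h]; linarith [excess_nonpos_of_notMem_Jset ρ₁ ρ₂ hl x]) hsub
  rcases eq_or_ne v l with rfl | hvl
  · have : arcOC v v = ∅ := eq_empty_of_forall_notMem fun w hw ↦
      (hw.1.trans_le hw.2).ne' (theta_self v)
    rw [this, measureDiff_empty]
    exact flux_nonneg ρ₁ ρ₂ v
  have hL : 0 < theta l v := (theta_nonneg l v).lt_of_ne' (theta_eq_zero_iff.not.2 hvl)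
  have hlim := (tendsto_const_nhds (x := measureDiff ρ₁ ρ₂ (arcOC l v))).sub
    (Filter.Tendsto.measureDiff (t := ∅)
      (by simpa using tendsto_measure_Ioo_nhdsGT (ρ₁.map (theta l)) 0)
      (by simpa using tendsto_measure_Ioo_nhdsGT (ρ₂.map (theta l)) 0))
  rw [measureDiff_empty, sub_zero] at hlim
  refine le_of_tendsto hlim ?_
  filter_upwards [Ioc_mem_nhdsGT hL] with a ha
  set u := l + (a : Circle')
  have hua : theta l u = a := theta_add_coe l ⟨ha.1.le, ha.2.trans_lt (theta_lt_one l v)⟩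
  have hu : u ∈ arcOC l v := show 0 < _ ∧ _ ≤ _ by rw [hua]; exact ha
  rw [measureDiff_arcOC_eq_add_excess ρ₁ ρ₂ hu, ← hua,
    measureDiff_map (measurable_theta l) measurableSet_Ioo]
  exact (add_sub_cancel_left _ _).trans_le (excess_le_flux ρ₁ ρ₂ u v)

end Flux

theorem stmt2_general (ρ₁ ρ₂ : Measure Circle') [IsFiniteMeasure ρ₁] [IsFiniteMeasure ρ₂]
    (v : Circle') :
    (∀ l : Circle', l ∈ Jset ρ₁ ρ₂ → arcCC l v ⊆ Jset ρ₁ ρ₂ →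
      (∀ ε : ℝ, 0 < ε → ∃ w ∈ arcCO (l - (ε : Circle')) l, w ∉ Jset ρ₁ ρ₂) →
      flux ρ₁ ρ₂ v = excess ρ₁ ρ₂ l v) ∧
    (∀ l : Circle', l ∉ Jset ρ₁ ρ₂ → arcOC l v ⊆ Jset ρ₁ ρ₂ →
      flux ρ₁ ρ₂ v = (ρ₁ (arcOC l v)).toReal - (ρ₂ (arcOC l v)).toReal) :=
  ⟨fun _ hl hsub hε ↦ flux_eq_excess_of_arcCC_subset_Jset ρ₁ ρ₂ hl hsub hε,
    fun _ hl hsub ↦ flux_eq_measureDiff_arcOC_of_notMem_Jset ρ₁ ρ₂ hl hsub⟩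

/-- value of the flux at a point `v ∈ 𝒥` in terms of the left endpoint of
the connected component of `𝒥` containing `v`.
(a) If `l ∈ 𝒥`, the closed arc `[l,v]` is contained in `𝒥` and every arc `[l-ε, l)`
contains a point outside `𝒥`, then `J(v) = E(l,v)`.
(b) If `l ∉ 𝒥` and the half-open arc `(l,v]` is contained in `𝒥`, then
`J(v) = ρ₁((l,v]) - ρ₂((l,v])`. -/
theorem stmt2 (ρ₁ ρ₂ : Measure Circle') [IsFiniteMeasure ρ₁] [IsFiniteMeasure ρ₂]
    (hmass : ρ₁ Set.univ ≤ ρ₂ Set.univ) (v : Circle') (hv : v ∈ Jset ρ₁ ρ₂) :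
    (∀ l : Circle', l ∈ Jset ρ₁ ρ₂ → arcCC l v ⊆ Jset ρ₁ ρ₂ →
      (∀ ε : ℝ, 0 < ε → ∃ w ∈ arcCO (l - (ε : Circle')) l, w ∉ Jset ρ₁ ρ₂) →
      flux ρ₁ ρ₂ v = excess ρ₁ ρ₂ l v) ∧
    (∀ l : Circle', l ∉ Jset ρ₁ ρ₂ → arcOC l v ⊆ Jset ρ₁ ρ₂ →
      flux ρ₁ ρ₂ v = (ρ₁ (arcOC l v)).toReal - (ρ₂ (arcOC l v)).toReal) :=
  stmt2_general ρ₁ ρ₂ v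

end
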